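/- Fix d ≥ 1, K ≥ 1 and σ > 0, and define q(x, y_{1:K}) = ∫_{ℝ^d} φ(z; x, (σ²/2) I_d) ∏_{i=1}^K φ(y_i; z, (σ²/2) I_d) dz for x ∈ ℝ^d and y_{1:K} = (y_1,…,y_K) ∈ (ℝ^d)^K, where φ(·; m, Σ) denotes the density of the multivariate Gaussian distribution with mean m and covariance Σ. Then for every i = 1,…,K and all x, y_{1:K}, one has q(y_i, (x, y_{−i})) = q(x, y_{1:K}), where (x, y_{−i}) denotes the vector y_{1:K} with its i-th coordinate replaced by x. -/
import Mathlib


open MeasureTheory Real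

noncomputable section

/-- The density at `u` of the `d`-dimensional Gaussian distribution with mean `m` and
covariance matrix `c I_d` (for `c > 0`):
`φ(u; m, c I_d) = (2π c)^{-d/2} exp(-‖u − m‖² / (2c))`. -/
def gaussPdf (d : ℕ) (c : ℝ) (m u : EuclideanSpace ℝ (Fin d)) : ℝ :=
  (2 * Real.pi * c) ^ (-(d : ℝ) / 2) * Real.exp (-‖u - m‖ ^ 2 / (2 * c))

/-- The star-shaped proposal density of Tjelmeland/Example 2:
`q(x, y_{1:K}) = ∫ φ(z; x, (σ²/2) I_d) ∏ᵢ φ(yᵢ; z, (σ²/2) I_d) dz`. -/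
def starDensity (d K : ℕ) (σ : ℝ) (x : EuclideanSpace ℝ (Fin d))
    (y : Fin K → EuclideanSpace ℝ (Fin d)) : ℝ :=
  ∫ z : EuclideanSpace ℝ (Fin d),
    gaussPdf d (σ ^ 2 / 2) x z * ∏ i : Fin K, gaussPdf d (σ ^ 2 / 2) z (y i)

/-- the star-shaped proposal density satisfies
`q(yᵢ, (x, y_{-i})) = q(x, y_{1:K})` for every `i`, `x` and `y_{1:K}`, where
`(x, y_{-i})` denotes the vector `y_{1:K}` with its `i`-th coordinate replaced by `x`. -/
theorem starDensity_exchangeable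
    (d K : ℕ) (hd : 1 ≤ d) (hK : 1 ≤ K) (σ : ℝ) (hσ : 0 < σ) :
    ∀ (i : Fin K) (x : EuclideanSpace ℝ (Fin d))
      (y : Fin K → EuclideanSpace ℝ (Fin d)),
      starDensity d K σ (y i) (Function.update y i x) = starDensity d K σ x y := by
  intro i x y
  unfold starDensity
  congr 1
  funext z
  have hsym : ∀ m u : EuclideanSpace ℝ (Fin d),
      gaussPdf d (σ ^ 2 / 2) m u = gaussPdf d (σ ^ 2 / 2) u m := by
    intro m u
    unfold gaussPdf
    rw [norm_sub_rev]
  have h1 : ∏ j : Fin K, gaussPdf d (σ ^ 2 / 2) z (Function.update y i x j)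
      = gaussPdf d (σ ^ 2 / 2) z x *
        ∏ j ∈ Finset.univ.erase i, gaussPdf d (σ ^ 2 / 2) z (y j) := by
    rw [← Finset.mul_prod_erase Finset.univ _ (Finset.mem_univ i),
      Function.update_self]
    congr 1
    exact Finset.prod_congr rfl fun j hj => by
      rw [Function.update_of_ne (Finset.ne_of_mem_erase hj)]
  have h2 : ∏ j : Fin K, gaussPdf d (σ ^ 2 / 2) z (y j)
      = gaussPdf d (σ ^ 2 / 2) z (y i) *
        ∏ j ∈ Finset.univ.erase i, gaussPdf d (σ ^ 2 / 2) z (y j) :=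
    (Finset.mul_prod_erase Finset.univ _ (Finset.mem_univ i)).symm
  rw [h1, h2, hsym (y i) z, hsym z x]
  ring
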